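/- arXiv:2106.11970 — 5 statements merged into one kernel-verified Lean document; each statement's English description precedes it below -/
import Mathlib

section
/- For every v ∈ ℝ^n and every θ ≥ 0, the soft-thresholding operator applied to v is the unique minimizer of the function u ↦ (1/2)‖u − v‖₂² + θ‖u‖₁ over ℝ^n; that is, ST(v,θ) = argmin_{u ∈ ℝ^n} (1/2)‖u − v‖₂² + θ‖u‖₁. -/
/-- The soft-thresholding operator, defined componentwise by
`ST(v,θ)_i = sign(v_i) · max(|v_i| − θ, 0)`. -/
noncomputable def softThreshold {n : ℕ} (v : Fin n → ℝ) (θ : ℝ) : Fin n → ℝ :=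
  fun i => Real.sign (v i) * max (|v i| - θ) 0

lemma st_key (v θ x : ℝ) (hθ : 0 ≤ θ) :
    (1/2) * (Real.sign v * max (|v| - θ) 0 - v)^2 + θ * |Real.sign v * max (|v| - θ) 0|
      + (1/2) * (x - Real.sign v * max (|v| - θ) 0)^2
      ≤ (1/2) * (x - v)^2 + θ * |x| := by
  rcases le_or_gt (|v|) θ with hv | hv
  · rw [max_eq_right (by linarith)]
    simp only [mul_zero, zero_sub, abs_zero, sub_zero]
    have h1 : x * v ≤ |x| * θ := by
      calc x * v ≤ |x * v| := le_abs_self _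
        _ = |x| * |v| := abs_mul _ _
        _ ≤ |x| * θ := by exact mul_le_mul_of_nonneg_left hv (abs_nonneg x)
    nlinarith [abs_nonneg x, sq_abs v, sq_abs x, neg_abs_le v, le_abs_self v]
  · rw [max_eq_left (by linarith)]
    rcases lt_trichotomy v 0 with h | h | h
    · rw [abs_of_neg h] at hv ⊢
      rw [Real.sign_of_neg h]
      have h2 : |-1 * (-v - θ)| = -v - θ := by
        have e : -1 * (-v - θ) = v + θ := by ring
        rw [e, abs_of_nonpos (by linarith), neg_add']
      rw [h2]
      nlinarith [neg_le_abs x]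
    · simp [h] at hv; linarith
    · rw [abs_of_pos h] at hv ⊢
      rw [Real.sign_of_pos h]
      have h2 : |1 * (v - θ)| = v - θ := by
        rw [one_mul, abs_of_nonneg (by linarith)]
      rw [h2]
      nlinarith [le_abs_self x]

/-- For every `v ∈ ℝ^n` and `θ ≥ 0`, the soft-thresholding operator applied to `v`
is the unique minimizer of `u ↦ (1/2)‖u − v‖₂² + θ‖u‖₁` over `ℝ^n`. -/
theorem softThreshold_is_unique_prox {n : ℕ} (v : Fin n → ℝ) (θ : ℝ) (hθ : 0 ≤ θ) :
    (∀ u : Fin n → ℝ,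
      (1 / 2) * ∑ i, (softThreshold v θ i - v i) ^ 2 + θ * ∑ i, |softThreshold v θ i| ≤
        (1 / 2) * ∑ i, (u i - v i) ^ 2 + θ * ∑ i, |u i|) ∧
    (∀ u : Fin n → ℝ, u ≠ softThreshold v θ →
      (1 / 2) * ∑ i, (softThreshold v θ i - v i) ^ 2 + θ * ∑ i, |softThreshold v θ i| <
        (1 / 2) * ∑ i, (u i - v i) ^ 2 + θ * ∑ i, |u i|) := by
  have key : ∀ u : Fin n → ℝ,
      (1 / 2) * ∑ i, (softThreshold v θ i - v i) ^ 2 + θ * ∑ i, |softThreshold v θ i|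
        + (1/2) * ∑ i, (u i - softThreshold v θ i)^2 ≤
        (1 / 2) * ∑ i, (u i - v i) ^ 2 + θ * ∑ i, |u i| := by
    intro u
    have h := Finset.sum_le_sum (fun i (_ : i ∈ Finset.univ) =>
      st_key (v i) θ (u i) hθ)
    simp only [Finset.sum_add_distrib, ← Finset.mul_sum] at h
    simp only [softThreshold]
    linarith
  constructor
  · intro u
    have h := key u
    have h2 : 0 ≤ (1/2) * ∑ i, (u i - softThreshold v θ i)^2 := by
      positivity
    linarith
  · intro u hu
    have h := key u
    obtain ⟨i, hi⟩ := Function.ne_iff.mp hu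
    have h3 : 0 < (u i - softThreshold v θ i)^2 := by
      have : u i - softThreshold v θ i ≠ 0 := sub_ne_zero_of_ne hi
      positivity
    have h2 : (u i - softThreshold v θ i)^2 ≤ ∑ j, (u j - softThreshold v θ j)^2 :=
      Finset.single_le_sum (f := fun j => (u j - softThreshold v θ j)^2) (fun j _ => sq_nonneg _) (Finset.mem_univ i)
    linarith
end

section
/- Let L ≥ the largest eigenvalue of AᵀA, L > 0, let x̂ be any minimizer of the Lasso objective P, and let the ISTA iterates be defined by x^{t+1} = ST(x^t + (1/L)Aᵀ(y − Ax^t), λ/L) from an arbitrary initial point x^0. Then for every t ≥ 1, P(x^t) − P(x̂) ≤ L‖x^0 − x̂‖₂²/(2t); i.e., ISTA converges at a sublinear O(1/t) rate in objective value. -/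
/-- Key 1D inequality for the soft-thresholding operator: `s = ST(v, θ)` minimizes
`u ↦ θ|u| + (1/2)(u − v)²`, in the strong sense that
`θ|s| + (v − s)(z − s) ≤ θ|z|` for every `z`. -/
lemma soft_key (θ v z : ℝ) (hθ : 0 ≤ θ) :
    θ * |Real.sign v * max (|v| - θ) 0| +
      (v - Real.sign v * max (|v| - θ) 0) * (z - Real.sign v * max (|v| - θ) 0) ≤ θ * |z| := by
  rcases le_or_gt (|v|) θ with h | h
  · have hs : Real.sign v * max (|v| - θ) 0 = 0 := by
      rw [max_eq_right (by linarith)]; ring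
    rw [hs]
    simp only [abs_zero, mul_zero, zero_add, sub_zero]
    have h2 : v * z ≤ |v| * |z| := by
      calc v * z ≤ |v * z| := le_abs_self _
      _ = |v| * |z| := abs_mul v z
    have h3 := mul_le_mul_of_nonneg_right h (abs_nonneg z)
    linarith
  · have hmax : max (|v| - θ) 0 = |v| - θ := max_eq_left (by linarith)
    rcases lt_trichotomy v 0 with hv | hv | hv
    · have hsign : Real.sign v = -1 := Real.sign_of_neg hv
      have habs : |v| = -v := abs_of_neg hv
      rw [habs] at h
      rw [hsign, hmax, habs]
      have h1 : (-1 : ℝ) * (-v - θ) = v + θ := by ring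
      have h2 : |(-1 : ℝ) * (-v - θ)| = -(v + θ) := by
        rw [h1, abs_of_nonpos (by linarith)]
      rw [h2, h1]
      nlinarith [neg_abs_le z]
    · exfalso; rw [hv] at h; simp at h; linarith
    · have hsign : Real.sign v = 1 := Real.sign_of_pos hv
      have habs : |v| = v := abs_of_pos hv
      rw [hsign, hmax, habs]
      have h2 : |(1 : ℝ) * (v - θ)| = v - θ := by
        rw [one_mul, abs_of_nonneg (by linarith)]
      rw [h2, one_mul]
      nlinarith [le_abs_self z]

/-- Transpose swap for the dot product: `⟨w, A d⟩ = ⟨Aᵀ w, d⟩`. -/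
lemma dot_mulVec {m n : ℕ} (A : Matrix (Fin m) (Fin n) ℝ) (w : Fin m → ℝ) (d : Fin n → ℝ) :
    ∑ j, w j * A.mulVec d j = ∑ i, A.transpose.mulVec w i * d i := by
  simp only [Matrix.mulVec, dotProduct, Matrix.transpose_apply, Finset.mul_sum,
    Finset.sum_mul]
  rw [Finset.sum_comm]
  exact Finset.sum_congr rfl fun i _ => Finset.sum_congr rfl fun j _ => by ring

lemma mulVec_sub_pt {m n : ℕ} (A : Matrix (Fin m) (Fin n) ℝ) (u x : Fin n → ℝ) (j : Fin m) :
    A.mulVec u j - A.mulVec x j = A.mulVec (u - x) j := by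
  simp only [Matrix.mulVec, dotProduct, Pi.sub_apply, mul_sub, Finset.sum_sub_distrib]

/-- Exact quadratic expansion of the data-fit term around `x`. -/
lemma quad_expand {m n : ℕ} (A : Matrix (Fin m) (Fin n) ℝ) (y : Fin m → ℝ) (u x : Fin n → ℝ) :
    ∑ j, (y j - A.mulVec u j) ^ 2
      = ∑ j, (y j - A.mulVec x j) ^ 2
        - 2 * ∑ i, A.transpose.mulVec (y - A.mulVec x) i * (u i - x i)
        + ∑ j, (A.mulVec (u - x) j) ^ 2 := by
  rw [← dot_mulVec]
  have key : ∀ j, (y j - A.mulVec u j) ^ 2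
      = (y j - A.mulVec x j) ^ 2 - 2 * ((y - A.mulVec x) j * A.mulVec (u - x) j)
        + (A.mulVec (u - x) j) ^ 2 := by
    intro j
    have h := mulVec_sub_pt A u x j
    have h2 : (y - A.mulVec x) j = y j - A.mulVec x j := rfl
    rw [h2, ← h]
    ring
  calc ∑ j, (y j - A.mulVec u j) ^ 2
      = ∑ j, ((y j - A.mulVec x j) ^ 2 - 2 * ((y - A.mulVec x) j * A.mulVec (u - x) j)
          + (A.mulVec (u - x) j) ^ 2) := Finset.sum_congr rfl fun j _ => key j
    _ = ∑ j, (y j - A.mulVec x j) ^ 2 - 2 * ∑ j, (y - A.mulVec x) j * A.mulVec (u - x) j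
          + ∑ j, (A.mulVec (u - x) j) ^ 2 := by
        rw [Finset.sum_add_distrib, Finset.sum_sub_distrib, Finset.mul_sum]

/-- The Lasso objective `P(x) = (1/2)‖y − Ax‖₂² + λ‖x‖₁`. -/
noncomputable def lassoObj {m n : ℕ} (A : Matrix (Fin m) (Fin n) ℝ) (y : Fin m → ℝ)
    (lam : ℝ) (x : Fin n → ℝ) : ℝ :=
  (1 / 2) * ∑ i, (y i - A.mulVec x i) ^ 2 + lam * ∑ i, |x i|

/-- The ISTA map `T(x) = ST(x + (1/L)Aᵀ(y − Ax), λ/L)`. -/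
noncomputable def istaMap {m n : ℕ} (A : Matrix (Fin m) (Fin n) ℝ) (y : Fin m → ℝ)
    (lam L : ℝ) (x : Fin n → ℝ) : Fin n → ℝ :=
  softThreshold (x + (1 / L) • A.transpose.mulVec (y - A.mulVec x)) (lam / L)

/-- The fundamental prox-gradient descent inequality (Beck–Teboulle):
for `s = T(x)` and every `z`, `P(z) − P(s) ≥ (L/2)(‖z − s‖² − ‖z − x‖²)`. -/
lemma ista_descent {m n : ℕ} (A : Matrix (Fin m) (Fin n) ℝ) (y : Fin m → ℝ)
    (lam : ℝ) (hlam : 0 ≤ lam) (L : ℝ) (hL : 0 < L)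
    (hLbound : ∀ x : Fin n → ℝ, ∑ i, (A.mulVec x i) ^ 2 ≤ L * ∑ i, (x i) ^ 2)
    (x z : Fin n → ℝ) :
    L / 2 * (∑ i, (z i - istaMap A y lam L x i) ^ 2 - ∑ i, (z i - x i) ^ 2)
      ≤ lassoObj A y lam z - lassoObj A y lam (istaMap A y lam L x) := by
  set s := istaMap A y lam L x with hsdef
  set w := A.transpose.mulVec (y - A.mulVec x) with hw
  have hv : ∀ i, s i = Real.sign (x i + w i / L) * max (|x i + w i / L| - lam / L) 0 := by
    intro i
    have harg : (x + (1 / L) • w) i = x i + w i / L := by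
      simp [Pi.add_apply, Pi.smul_apply, smul_eq_mul]
      ring
    rw [hsdef]
    show softThreshold (x + (1 / L) • w) (lam / L) i = _
    rw [softThreshold, harg]
  have hL' : L ≠ 0 := ne_of_gt hL
  have hkey : ∀ i, lam * |s i| + (L * (x i - s i) + w i) * (z i - s i) ≤ lam * |z i| := by
    intro i
    have h := soft_key (lam / L) (x i + w i / L) (z i) (by positivity)
    rw [← hv i] at h
    have c1 : L * (lam / L) = lam := by field_simp
    have c2 : L * (w i / L) = w i := by field_simp
    have e1 : lam * |s i| + (L * (x i - s i) + w i) * (z i - s i)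
        = L * (lam / L * |s i| + (x i + w i / L - s i) * (z i - s i)) := by
      linear_combination (-(|s i|)) * c1 - (z i - s i) * c2
    have e2 : lam * |z i| = L * (lam / L * |z i|) := by
      rw [← mul_assoc, c1]
    rw [e1, e2]
    exact mul_le_mul_of_nonneg_left h hL.le
  have hsum : lam * ∑ i, |s i| + ∑ i, (L * (x i - s i) + w i) * (z i - s i)
      ≤ lam * ∑ i, |z i| := by
    have h := Finset.sum_le_sum (fun i (_ : i ∈ Finset.univ) => hkey i)
    rw [Finset.sum_add_distrib, ← Finset.mul_sum, ← Finset.mul_sum] at h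
    exact h
  have id2 : ∑ i, (L * (x i - s i) + w i) * (z i - s i)
      = L * ∑ i, (x i - s i) * (z i - s i) + ∑ i, w i * (z i - s i) := by
    rw [Finset.mul_sum, ← Finset.sum_add_distrib]
    exact Finset.sum_congr rfl fun i _ => by ring
  have id1 : ∑ i, w i * (z i - x i) = ∑ i, w i * (z i - s i) + ∑ i, w i * (s i - x i) := by
    rw [← Finset.sum_add_distrib]
    exact Finset.sum_congr rfl fun i _ => by ring
  have id3L : L * ∑ i, (z i - x i) ^ 2
      = L * ∑ i, (z i - s i) ^ 2 - 2 * (L * ∑ i, (x i - s i) * (z i - s i))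
        + L * ∑ i, (s i - x i) ^ 2 := by
    have id3 : ∑ i, (z i - x i) ^ 2
        = ∑ i, (z i - s i) ^ 2 - 2 * ∑ i, (x i - s i) * (z i - s i)
          + ∑ i, (s i - x i) ^ 2 := by
      rw [Finset.mul_sum, ← Finset.sum_sub_distrib, ← Finset.sum_add_distrib]
      exact Finset.sum_congr rfl fun i _ => by ring
    rw [id3]; ring
  have hqz := quad_expand A y z x
  have hqs := quad_expand A y s x
  rw [← hw] at hqz hqs
  have hAz : (0 : ℝ) ≤ ∑ j, (A.mulVec (z - x) j) ^ 2 := by positivity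
  have hAs : ∑ j, (A.mulVec (s - x) j) ^ 2 ≤ L * ∑ i, (s i - x i) ^ 2 := by
    have h := hLbound (s - x)
    simpa [Pi.sub_apply] using h
  rw [id2] at hsum
  rw [lassoObj, lassoObj]
  nlinarith [hqz, hqs, hAz, hAs, hsum, id1, id3L]

/-- Sublinear `O(1/t)` convergence of ISTA in objective value: if `L > 0` dominates the
largest eigenvalue of `AᵀA`, `x̂` minimizes the Lasso objective `P`, and the iterates
satisfy `x^{t+1} = ST(x^t + (1/L)Aᵀ(y − Ax^t), λ/L)` from an arbitrary `x^0`, then for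
every `t ≥ 1`, `P(x^t) − P(x̂) ≤ L‖x^0 − x̂‖₂²/(2t)`. -/
theorem ista_sublinear_convergence {m n : ℕ} (A : Matrix (Fin m) (Fin n) ℝ)
    (y : Fin m → ℝ) (lam : ℝ) (hlam : 0 ≤ lam) (L : ℝ) (hL : 0 < L)
    (hLbound : ∀ x : Fin n → ℝ, ∑ i, (A.mulVec x i) ^ 2 ≤ L * ∑ i, (x i) ^ 2)
    (xhat : Fin n → ℝ) (hxhat : ∀ z : Fin n → ℝ, lassoObj A y lam xhat ≤ lassoObj A y lam z)
    (x : ℕ → Fin n → ℝ) (hstep : ∀ t : ℕ, x (t + 1) = istaMap A y lam L (x t)) :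
    ∀ t : ℕ, 1 ≤ t →
      lassoObj A y lam (x t) - lassoObj A y lam xhat ≤
        L * (∑ i, (x 0 i - xhat i) ^ 2) / (2 * (t : ℝ)) := by
  -- one-step progress towards the minimizer
  have hprog : ∀ k : ℕ, lassoObj A y lam (x (k + 1)) - lassoObj A y lam xhat
      ≤ L / 2 * (∑ i, (x k i - xhat i) ^ 2 - ∑ i, (x (k + 1) i - xhat i) ^ 2) := by
    intro k
    have h := ista_descent A y lam hlam L hL hLbound (x k) xhat
    rw [← hstep k] at h
    have e1 : ∑ i, (xhat i - x (k + 1) i) ^ 2 = ∑ i, (x (k + 1) i - xhat i) ^ 2 :=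
      Finset.sum_congr rfl fun i _ => by ring
    have e2 : ∑ i, (xhat i - x k i) ^ 2 = ∑ i, (x k i - xhat i) ^ 2 :=
      Finset.sum_congr rfl fun i _ => by ring
    rw [e1, e2] at h
    linarith
  -- monotone decrease of the objective
  have hmono : ∀ k : ℕ, lassoObj A y lam (x (k + 1)) ≤ lassoObj A y lam (x k) := by
    intro k
    have h := ista_descent A y lam hlam L hL hLbound (x k) (x k)
    rw [← hstep k] at h
    have e0 : ∑ i, (x k i - x k i) ^ 2 = 0 := by simp
    rw [e0] at h
    have hq : (0 : ℝ) ≤ ∑ i, (x k i - x (k + 1) i) ^ 2 := by positivity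
    nlinarith
  -- accumulated bound by induction
  have key : ∀ t : ℕ, (t : ℝ) * (lassoObj A y lam (x t) - lassoObj A y lam xhat)
      ≤ L / 2 * (∑ i, (x 0 i - xhat i) ^ 2 - ∑ i, (x t i - xhat i) ^ 2) := by
    intro t
    induction t with
    | zero => simp
    | succ k ih =>
      have h1 := hprog k
      have h2 := hmono k
      have hk : (0 : ℝ) ≤ (k : ℝ) := Nat.cast_nonneg k
      push_cast
      nlinarith [mul_nonneg hk (sub_nonneg.2 h2)]
  intro t ht
  have ht' : (0 : ℝ) < (t : ℝ) := by exact_mod_cast Nat.lt_of_lt_of_le Nat.zero_lt_one ht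
  have hDt : (0 : ℝ) ≤ ∑ i, (x t i - xhat i) ^ 2 := by positivity
  rw [le_div_iff₀ (by positivity : (0:ℝ) < 2 * (t : ℝ))]
  nlinarith [key t, hDt]
end

section
/- Let L > 0 and define the ISTA map T(x) = ST(x + (1/L)Aᵀ(y − Ax), λ/L). Then x̂ ∈ ℝ^n is a fixed point of T (i.e., T(x̂) = x̂) if and only if x̂ is a global minimizer of the Lasso objective P. -/
/-!
Write `c = Aᵀ(y - A x)`. Soft thresholding fixes `x` exactly when, in every coordinate,
`|cᵢ| ≤ λ` and `cᵢ xᵢ = λ |xᵢ|`, i.e. when `xᵢ` minimises the convex function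
`t ↦ λ |t| - cᵢ t`. Expanding the square, `P z - P x` is the sum of the increments of these
coordinate functions plus `½ ‖A (z - x)‖²`, so the coordinate conditions give global optimality.
Conversely, moving a single coordinate of a minimiser shows that `xᵢ` minimises
`t ↦ λ |t| - cᵢ t` up to a quadratic error term, and convexity removes that error.
-/

open Set Filter Matrix

theorem sign_mul_max_abs_sub_eq_iff {v x θ : ℝ} (hθ : 0 ≤ θ) :
    Real.sign v * max (|v| - θ) 0 = x ↔ |v - x| ≤ θ ∧ (v - x) * x = θ * |x| := by
  constructor
  · rintro rfl
    rcases le_or_gt |v| θ with hle | hlt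
    · simp [hle]
    rcases lt_abs.mp hlt with hv | hv
    · have hv0 : 0 < v := hθ.trans_lt hv
      rw [Real.sign_of_pos hv0, abs_of_pos hv0, max_eq_left (by linarith), one_mul,
        sub_sub_cancel, abs_of_nonneg hθ, abs_of_pos (sub_pos.mpr hv)]
      exact ⟨le_rfl, rfl⟩
    · have hv0 : v < 0 := by linarith
      rw [Real.sign_of_neg hv0, abs_of_neg hv0, max_eq_left (by linarith),
        show v - -1 * (-v - θ) = -θ by ring, abs_neg, abs_of_nonneg hθ,
        abs_of_neg (by linarith)]
      constructor <;> linarith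
  · rintro ⟨hw, hwx⟩
    rcases lt_trichotomy x 0 with hx | rfl | hx
    · rw [abs_of_neg hx] at hwx
      obtain rfl : v = x - θ := by nlinarith
      rw [Real.sign_of_neg (by linarith), abs_of_neg (by linarith), max_eq_left (by linarith)]
      ring
    · simp_all
    · rw [abs_of_pos hx] at hwx
      obtain rfl : v = x + θ := by nlinarith
      rw [Real.sign_of_pos (by linarith), abs_of_pos (by linarith), max_eq_left (by linarith)]
      ring

theorem forall_mul_abs_sub_mul_le_iff {c x lam : ℝ} :
    (∀ t, lam * |x| - c * x ≤ lam * |t| - c * t) ↔ |c| ≤ lam ∧ c * x = lam * |x| := by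
  constructor
  · intro h
    have hcx : c * x = lam * |x| := by
      have h₀ := h 0
      have h₂ := h (2 * x)
      rw [abs_zero] at h₀
      rw [abs_mul, abs_two] at h₂
      linarith
    have hnonneg : ∀ t, c * t ≤ lam * |t| := fun t => by linarith [h t]
    refine ⟨abs_le.mpr ⟨?_, ?_⟩, hcx⟩
    · have := hnonneg (-1)
      rw [abs_neg, abs_one] at this
      linarith
    · simpa using hnonneg 1
  · rintro ⟨hc, hcx⟩ t
    nlinarith [le_abs_self (c * t), abs_mul c t, mul_le_mul_of_nonneg_right hc (abs_nonneg t)]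

theorem ConvexOn.le_of_forall_le_add_mul_norm_sub_sq {E : Type*} [NormedAddCommGroup E]
    [NormedSpace ℝ E] {f : E → ℝ} (hf : ConvexOn ℝ univ f) {x : E} {K : ℝ}
    (h : ∀ y, f x ≤ f y + K * ‖y - x‖ ^ 2) (y : E) : f x ≤ f y := by
  have hsmall : ∀ ε ∈ Ioo (0 : ℝ) 1, f x ≤ f y + K * ‖y - x‖ ^ 2 * ε := by
    rintro ε ⟨hε₀, hε₁⟩
    have hseg : (1 - ε) • x + ε • y - x = ε • (y - x) := by module
    have hconv := hf.2 (mem_univ x) (mem_univ y) (show 0 ≤ 1 - ε by linarith) hε₀.le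
      (by ring)
    have hquad := h ((1 - ε) • x + ε • y)
    rw [hseg, norm_smul, Real.norm_of_nonneg hε₀.le] at hquad
    rw [smul_eq_mul, smul_eq_mul] at hconv
    have : ε * f x ≤ ε * (f y + K * ‖y - x‖ ^ 2 * ε) := by nlinarith
    exact le_of_mul_le_mul_left this hε₀
  have hcont : Continuous fun ε : ℝ => f y + K * ‖y - x‖ ^ 2 * ε := by fun_prop
  exact ge_of_tendsto ((hcont.tendsto' 0 _ (by simp)).mono_left nhdsWithin_le_nhds)
    (eventually_of_mem (Ioo_mem_nhdsGT one_pos) hsmall)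

section Lasso

variable {m n : ℕ} (A : Matrix (Fin m) (Fin n) ℝ) (y : Fin m → ℝ) (lam : ℝ)

theorem lassoObj_eq_add (x z : Fin n → ℝ) :
    lassoObj A y lam z = lassoObj A y lam x
      + ∑ i, ((lam * |z i| - (Aᵀ *ᵥ (y - A *ᵥ x)) i * z i)
        - (lam * |x i| - (Aᵀ *ᵥ (y - A *ᵥ x)) i * x i))
      + 1 / 2 * ∑ j, (A *ᵥ (z - x)) j ^ 2 := by
  have hcross : ∑ j, (y - A *ᵥ x) j * (A *ᵥ (z - x)) j
      = ∑ i, (Aᵀ *ᵥ (y - A *ᵥ x)) i * z i - ∑ i, (Aᵀ *ᵥ (y - A *ᵥ x)) i * x i := by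
    simpa [dotProduct, mulVec_transpose, mul_sub] using
      dotProduct_mulVec (y - A *ᵥ x) A (z - x)
  have hsq : ∑ j, (y j - (A *ᵥ z) j) ^ 2 = ∑ j, (y j - (A *ᵥ x) j) ^ 2
      - 2 * ∑ j, (y - A *ᵥ x) j * (A *ᵥ (z - x)) j + ∑ j, (A *ᵥ (z - x)) j ^ 2 := by
    rw [Finset.mul_sum, ← Finset.sum_sub_distrib, ← Finset.sum_add_distrib]
    refine Finset.sum_congr rfl fun j _ => ?_
    simp only [mulVec_sub, Pi.sub_apply]
    ring
  rw [lassoObj, lassoObj, hsq, hcross]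
  simp only [Finset.sum_sub_distrib, ← Finset.mul_sum]
  ring

theorem lassoObj_update (x : Fin n → ℝ) (i : Fin n) (t : ℝ) :
    lassoObj A y lam (Function.update x i t) = lassoObj A y lam x
      + ((lam * |t| - (Aᵀ *ᵥ (y - A *ᵥ x)) i * t)
        - (lam * |x i| - (Aᵀ *ᵥ (y - A *ᵥ x)) i * x i))
      + 1 / 2 * (∑ j, A j i ^ 2) * (t - x i) ^ 2 := by
  have hdiff : Function.update x i t - x = Pi.single i (t - x i) := by
    ext k
    rcases eq_or_ne k i with rfl | hk <;> simp [*]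
  rw [lassoObj_eq_add A y lam x, hdiff, Fintype.sum_eq_single i fun k hk => by simp [hk],
    mul_assoc, Finset.sum_mul]
  simp [mulVec_single, mul_pow]

theorem istaMap_eq_self_iff {L : ℝ} {x : Fin n → ℝ} (hlam : 0 ≤ lam) (hL : 0 < L) :
    istaMap A y lam L x = x ↔ ∀ i,
      |(Aᵀ *ᵥ (y - A *ᵥ x)) i| ≤ lam ∧ (Aᵀ *ᵥ (y - A *ᵥ x)) i * x i = lam * |x i| := by
  have hL' : 0 < L⁻¹ := inv_pos.2 hL
  refine funext_iff.trans (forall_congr' fun i => ?_)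
  rw [istaMap, softThreshold, sign_mul_max_abs_sub_eq_iff (div_nonneg hlam hL.le)]
  simp only [Pi.add_apply, Pi.smul_apply, smul_eq_mul, add_sub_cancel_left]
  rw [div_eq_inv_mul lam L, one_div, abs_mul, abs_of_pos hL', mul_le_mul_iff_of_pos_left hL',
    mul_assoc, mul_assoc, mul_right_inj' hL'.ne']

end Lasso

/-- For `L > 0`, a point `x̂` is a fixed point of the ISTA map
`T(x) = ST(x + (1/L)Aᵀ(y − Ax), λ/L)` if and only if `x̂` is a global minimizer of the
Lasso objective `P`. -/
theorem ista_fixed_point_iff_minimizer {m n : ℕ} (A : Matrix (Fin m) (Fin n) ℝ)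
    (y : Fin m → ℝ) (lam : ℝ) (hlam : 0 ≤ lam) (L : ℝ) (hL : 0 < L)
    (xhat : Fin n → ℝ) :
    istaMap A y lam L xhat = xhat ↔
      ∀ z : Fin n → ℝ, lassoObj A y lam xhat ≤ lassoObj A y lam z := by
  rw [istaMap_eq_self_iff A y lam hlam hL]
  simp only [← forall_mul_abs_sub_mul_le_iff]
  constructor
  · intro hcoord z
    have hlin := Finset.sum_nonneg fun i (_ : i ∈ Finset.univ) => sub_nonneg.2 (hcoord i (z i))
    have hquad : 0 ≤ 1 / 2 * ∑ j, (A *ᵥ (z - xhat)) j ^ 2 := by positivity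
    linarith [lassoObj_eq_add A y lam xhat z]
  · intro hmin i
    have hconv (c : ℝ) : ConvexOn ℝ univ fun t : ℝ => lam * |t| - c * t :=
      ((convexOn_univ_norm.smul hlam).sub ((LinearMap.mul ℝ ℝ c).concaveOn convex_univ)).congr
        fun t _ => by simp
    refine (hconv _).le_of_forall_le_add_mul_norm_sub_sq (K := 1 / 2 * ∑ j, A j i ^ 2) fun t => ?_
    rw [Real.norm_eq_abs, sq_abs]
    linarith [hmin (Function.update xhat i t), lassoObj_update A y lam xhat i t]
end

section
/- Let A ∈ ℝ^{m×n} have nonzero columns a_1,…,a_n. Then the set of feasible matrices for A is nonempty, and the infimum defining the generalized mutual coherence μ(A) is attained: there exists W ∈ ℝ^{n×m} with W_iᵀ a_i = 1 for all i and max_{i≠j} |W_iᵀ a_j| = μ(A). In other words, the set W(A) of minimizers is nonempty. -/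
/-- `W ∈ ℝ^{n×m}` is feasible for `A ∈ ℝ^{m×n}` if each row `W_i` satisfies
`W_iᵀ a_i = 1`, where `a_i` is the `i`-th column of `A`. -/
def FeasibleFor {m n : ℕ} (A : Matrix (Fin m) (Fin n) ℝ)
    (W : Matrix (Fin n) (Fin m) ℝ) : Prop :=
  ∀ i : Fin n, ∑ k, W i k * A k i = 1

/-- The coherence-type objective `max_{i ≠ j} |W_iᵀ a_j|` associated with a pair `(A, W)`. -/
noncomputable def cohObj {m n : ℕ} (A : Matrix (Fin m) (Fin n) ℝ)
    (W : Matrix (Fin n) (Fin m) ℝ) : ℝ :=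
  ⨆ p : {p : Fin n × Fin n // p.1 ≠ p.2}, |∑ k, W p.1.1 k * A k p.1.2|

/-!
The objective depends on `W` only through `M = W * A`, whose diagonal the constraints pin to `1`.
The achievable `M` form a closed set (the range of `W ↦ W * A` cut by `diag M = 1`), and there the
sublevel set `{max_{i≠j} |M i j| ≤ c}` lies in the compact box `|M i j| ≤ max 1 c`, so the
continuous objective attains its minimum; any `W` with `W * A` the minimizer is optimal.
A feasible `W` exists since every column `a_i` is nonzero: take `W_i = a_i / ‖a_i‖²`.
-/

open Filter Set

namespace Matrix

variable {ι : Type*}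

noncomputable def offDiagSup (M : Matrix ι ι ℝ) : ℝ :=
  ⨆ p : {p : ι × ι // p.1 ≠ p.2}, |M p.1.1 p.1.2|

theorem isCompact_setOf_abs_apply_le {m n : Type*} (R : ℝ) :
    IsCompact {M : Matrix m n ℝ | ∀ i j, |M i j| ≤ R} := by
  have hbox : {M : Matrix m n ℝ | ∀ i j, |M i j| ≤ R} =
      univ.pi fun _ => univ.pi fun _ => Icc (-R) R := by
    ext M
    simp only [mem_ofPred_eq, abs_le, ← mem_Icc]
    exact forall_congr' fun i => (mem_univ_pi (f := M i)).symm.trans (by simp)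
  rw [hbox]
  exact isCompact_univ_pi fun _ => isCompact_univ_pi fun _ => isCompact_Icc

variable [Finite ι]

theorem abs_apply_le_offDiagSup (M : Matrix ι ι ℝ) {i j : ι} (hij : i ≠ j) :
    |M i j| ≤ offDiagSup M :=
  le_ciSup (f := fun p : {p : ι × ι // p.1 ≠ p.2} => |M p.1.1 p.1.2|)
    (Finite.bddAbove_range _) ⟨(i, j), hij⟩

theorem continuous_offDiagSup : Continuous (offDiagSup : Matrix ι ι ℝ → ℝ) := by
  have := Fintype.ofFinite {p : ι × ι // p.1 ≠ p.2}
  rcases isEmpty_or_nonempty {p : ι × ι // p.1 ≠ p.2} with h | h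
  · have hzero : offDiagSup = fun _ : Matrix ι ι ℝ => (0 : ℝ) := by
      funext M
      rw [offDiagSup, iSup_of_empty', Real.sSup_empty]
    rw [hzero]
    exact continuous_const
  · have hsup : offDiagSup = fun M : Matrix ι ι ℝ =>
        Finset.univ.sup' Finset.univ_nonempty fun p : {p : ι × ι // p.1 ≠ p.2} =>
          |M p.1.1 p.1.2| := by
      funext M
      rw [Finset.sup'_univ_eq_ciSup]
      rfl
    rw [hsup]
    exact Continuous.finset_sup'_apply _ fun p _ => (continuous_apply_apply _ _).abs

theorem abs_apply_le_max_offDiagSup {M : Matrix ι ι ℝ} (hdiag : ∀ i, M i i = 1) (i j : ι) :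
    |M i j| ≤ max 1 (offDiagSup M) := by
  rcases eq_or_ne i j with rfl | hij
  · rw [hdiag, abs_one]
    exact le_max_left _ _
  · exact (abs_apply_le_offDiagSup M hij).trans (le_max_right _ _)

theorem exists_isMinOn_offDiagSup {S : Set (Matrix ι ι ℝ)} (hS : IsClosed S)
    (hdiag : ∀ M ∈ S, ∀ i, M i i = 1) (hne : S.Nonempty) :
    ∃ M ∈ S, IsMinOn offDiagSup S M := by
  obtain ⟨M₀, hM₀⟩ := hne
  refine continuous_offDiagSup.continuousOn.exists_isMinOn' hS hM₀ ?_
  set R := max 1 (offDiagSup M₀)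
  have hbox := (isCompact_setOf_abs_apply_le (m := ι) (n := ι) R).compl_mem_cocompact
  filter_upwards [inter_mem_inf hbox (mem_principal_self S)] with M ⟨hMbox, hMS⟩
  by_contra! hlt
  exact hMbox fun i j => (abs_apply_le_max_offDiagSup (hdiag M hMS) i j).trans
    (max_le_max_left 1 hlt.le)

end Matrix

open Matrix

section FeasibleFor

variable {m n : ℕ} (A : Matrix (Fin m) (Fin n) ℝ)

theorem feasibleFor_iff_mul_apply_self {W : Matrix (Fin n) (Fin m) ℝ} :
    FeasibleFor A W ↔ ∀ i, (W * A) i i = 1 :=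
  Iff.rfl

theorem cohObj_eq_offDiagSup_mul (W : Matrix (Fin n) (Fin m) ℝ) :
    cohObj A W = offDiagSup (W * A) :=
  rfl

theorem exists_feasibleFor (hA : ∀ j : Fin n, (fun i => A i j) ≠ (0 : Fin m → ℝ)) :
    ∃ W, FeasibleFor A W := by
  refine ⟨fun j k => (Aᵀ j ⬝ᵥ Aᵀ j)⁻¹ * A k j, fun j => ?_⟩
  have hnorm : Aᵀ j ⬝ᵥ Aᵀ j ≠ 0 := dotProduct_self_eq_zero.not.mpr (hA j)
  simp only [mul_assoc, ← Finset.mul_sum]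
  exact inv_mul_cancel₀ hnorm

theorem isClosed_image_mul_setOf_feasibleFor :
    IsClosed ((· * A) '' {W | FeasibleFor A W}) := by
  have himage : (· * A) '' {W | FeasibleFor A W} =
      (LinearMap.range (mulRightLinearMap (Fin n) ℝ A) : Set _) ∩ {M | ∀ i, M i i = 1} := by
    ext M
    constructor
    · rintro ⟨W, hW, rfl⟩
      exact ⟨⟨W, rfl⟩, (feasibleFor_iff_mul_apply_self A).1 hW⟩
    · rintro ⟨⟨W, rfl⟩, hW⟩
      exact ⟨W, (feasibleFor_iff_mul_apply_self A).2 hW, rfl⟩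
  rw [himage, ofPred_forall]
  exact (Submodule.closed_of_finiteDimensional _).inter
    (isClosed_iInter fun i => isClosed_eq (continuous_id.matrix_elem i i) continuous_const)

theorem exists_isMinOn_cohObj {W₀ : Matrix (Fin n) (Fin m) ℝ} (hW₀ : FeasibleFor A W₀) :
    ∃ W, FeasibleFor A W ∧ IsMinOn (cohObj A) {W | FeasibleFor A W} W := by
  have hdiag : ∀ M ∈ (· * A) '' {W | FeasibleFor A W}, ∀ i, M i i = 1 := by
    rintro _ ⟨W, hW, rfl⟩
    exact (feasibleFor_iff_mul_apply_self A).1 hW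
  obtain ⟨_, ⟨W, hW, rfl⟩, hmin⟩ := exists_isMinOn_offDiagSup
    (isClosed_image_mul_setOf_feasibleFor A) hdiag ⟨_, W₀, hW₀, rfl⟩
  refine ⟨W, hW, isMinOn_iff.2 fun W' hW' => ?_⟩
  rw [cohObj_eq_offDiagSup_mul, cohObj_eq_offDiagSup_mul]
  exact hmin ⟨W', hW', rfl⟩

end FeasibleFor

/-- If `A` has nonzero columns, then the set of feasible matrices is nonempty and the
infimum defining the generalized mutual coherence `μ(A)` is attained: there exists a
feasible `W` with `max_{i≠j} |W_iᵀ a_j| = μ(A)`; i.e. `𝒲(A) ≠ ∅`. -/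
theorem generalized_mutual_coherence_attained {m n : ℕ}
    (A : Matrix (Fin m) (Fin n) ℝ)
    (hA : ∀ j : Fin n, (fun i => A i j) ≠ (0 : Fin m → ℝ)) :
    (∃ W : Matrix (Fin n) (Fin m) ℝ, FeasibleFor A W) ∧
    (∃ W : Matrix (Fin n) (Fin m) ℝ, FeasibleFor A W ∧
      cohObj A W = sInf {c : ℝ | ∃ W' : Matrix (Fin n) (Fin m) ℝ,
        FeasibleFor A W' ∧ cohObj A W' = c}) := by
  obtain ⟨W₀, hW₀⟩ := exists_feasibleFor A hA
  obtain ⟨W, hW, hmin⟩ := exists_isMinOn_cohObj A hW₀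
  have hleast : IsLeast (cohObj A '' {W | FeasibleFor A W}) (cohObj A W) :=
    ⟨⟨W, hW, rfl⟩, by rintro _ ⟨W', hW', rfl⟩; exact hmin hW'⟩
  exact ⟨⟨W₀, hW₀⟩, W, hW, hleast.csInf_eq.symm⟩
end

section
/- Consider the second (extragradient) half-step of ELISTA: x^{t+1} = ST(x^t − α₂W(Ax^{t+1/2} − y), θ₂). Suppose y = Ax* with S = supp(x*), supp(x^t) ⊆ S, supp(x^{t+1/2}) ⊆ S, W ∈ ℝ^{n×m} satisfies W_iᵀ a_i = 1 for all i and |W_iᵀ a_j| ≤ μ for all i ≠ j, α₂ ≥ 0, and θ₂ ≥ α₂·μ·‖x^{t+1/2} − x*‖₁. Then supp(x^{t+1}) ⊆ S. -/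
/-- No false positives of the second (extragradient) half-step of ELISTA: in the
noiseless model `y = Ax*`, if `supp(x^t) ⊆ S = supp(x*)`, `supp(x^{t+1/2}) ⊆ S`, the
rows of `W` satisfy `W_iᵀ a_i = 1` and `|W_iᵀ a_j| ≤ μ` for `i ≠ j`, `α₂ ≥ 0`, and
`θ₂ ≥ α₂·μ·‖x^{t+1/2} − x*‖₁`, then
`x^{t+1} = ST(x^t − α₂W(Ax^{t+1/2} − y), θ₂)` satisfies `supp(x^{t+1}) ⊆ S`. -/
theorem extragradient_step_no_false_positives {m n : ℕ}
    (A : Matrix (Fin m) (Fin n) ℝ) (W : Matrix (Fin n) (Fin m) ℝ)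
    (xstar xt xhalf : Fin n → ℝ) (yobs : Fin m → ℝ) (μ α₂ θ₂ : ℝ)
    (hy : yobs = A.mulVec xstar)
    (hsuppt : ∀ i : Fin n, xt i ≠ 0 → xstar i ≠ 0)
    (hsupph : ∀ i : Fin n, xhalf i ≠ 0 → xstar i ≠ 0)
    (hWdiag : ∀ i : Fin n, ∑ k, W i k * A k i = 1)
    (hWoff : ∀ i j : Fin n, i ≠ j → |∑ k, W i k * A k j| ≤ μ)
    (hα₂ : 0 ≤ α₂)
    (hθ₂ : θ₂ ≥ α₂ * μ * ∑ i, |xhalf i - xstar i|) :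
    ∀ i : Fin n,
      softThreshold (xt - α₂ • W.mulVec (A.mulVec xhalf - yobs)) θ₂ i ≠ 0 →
        xstar i ≠ 0 := by
  intro i hne
  by_contra hxs
  have hxt : xt i = 0 := by
    by_contra h; exact (hsuppt i h) hxs
  have hxh : xhalf i = 0 := by
    by_contra h; exact (hsupph i h) hxs
  -- compute the i-th coordinate of the argument
  set u : Fin n → ℝ := fun j => xhalf j - xstar j with hu
  have hvec : W.mulVec (A.mulVec xhalf - yobs) i = ∑ j, (∑ k, W i k * A k j) * u j := by
    have h1 : A.mulVec xhalf - yobs = A.mulVec u := by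
      subst hy
      funext k
      simp [Matrix.mulVec, dotProduct, hu, ← Finset.sum_sub_distrib, mul_sub]
    rw [h1]
    simp only [Matrix.mulVec, dotProduct, Finset.mul_sum]
    rw [Finset.sum_comm]
    congr 1; funext j
    rw [Finset.sum_mul]
    congr 1; funext k
    ring
  have hui : u i = 0 := by simp [hu, hxh, hxs]
  have hsum : |∑ j, (∑ k, W i k * A k j) * u j| ≤ μ * ∑ j, |u j| := by
    calc |∑ j, (∑ k, W i k * A k j) * u j| ≤ ∑ j, |(∑ k, W i k * A k j) * u j| :=
          Finset.abs_sum_le_sum_abs _ _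
      _ ≤ ∑ j, μ * |u j| := by
          apply Finset.sum_le_sum
          intro j _
          rw [abs_mul]
          by_cases hij : i = j
          · subst hij; simp [hui]
          · exact mul_le_mul_of_nonneg_right (hWoff i j hij) (abs_nonneg _)
      _ = μ * ∑ j, |u j| := by rw [Finset.mul_sum]
  have harg : |(xt - α₂ • W.mulVec (A.mulVec xhalf - yobs)) i| ≤ θ₂ := by
    have : (xt - α₂ • W.mulVec (A.mulVec xhalf - yobs)) i
        = -(α₂ * ∑ j, (∑ k, W i k * A k j) * u j) := by
      simp [hxt, hvec]
    rw [this, abs_neg, abs_mul, abs_of_nonneg hα₂]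
    calc α₂ * |∑ j, (∑ k, W i k * A k j) * u j| ≤ α₂ * (μ * ∑ j, |u j|) :=
          mul_le_mul_of_nonneg_left hsum hα₂
      _ = α₂ * μ * ∑ j, |u j| := by ring
      _ ≤ θ₂ := hθ₂
  simp [softThreshold] at hne
  simp only [Pi.sub_apply, Pi.smul_apply, smul_eq_mul] at harg
  linarith [hne.2]
end
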